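/- (Faithfulness of Δ_Z) For every density matrix ρ on ℂ^{d_A} ⊗ ℂ^{d_B}, one has Δ_Z(ρ) ≥ 0, and Δ_Z(ρ) = 0 if and only if ρ ∈ CQ_Z (equivalently, if and only if ρ = Δ(ρ)). -/

import Mathlib

open scoped Classical ComplexOrder
open Matrix Kronecker BigOperators

noncomputable section

/-- The von Neumann entropy (in bits) of a matrix: `-∑ᵢ λᵢ log₂ λᵢ` over its eigenvalues
(with the convention `0 · log₂ 0 = 0`); junk value `0` if the matrix is not Hermitian. -/
noncomputable def vnEntropy {n : Type*} [Fintype n] [DecidableEq n]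
    (ρ : Matrix n n ℂ) : ℝ :=
  if h : ρ.IsHermitian then -∑ i, h.eigenvalues i * Real.logb 2 (h.eigenvalues i) else 0

/-- A density matrix: positive semidefinite with unit trace. -/
def IsDensity {n : Type*} [Fintype n] (ρ : Matrix n n ℂ) : Prop :=
  ρ.PosSemidef ∧ ρ.trace = 1

/-- The dephasing (pinching) map on subsystem `A` with respect to the computational basis:
`Δ(ρ) = ∑ c (|c⟩⟨c| ⊗ I_B) ρ (|c⟩⟨c| ⊗ I_B)`. -/
noncomputable def dephA {A B : Type*} [Fintype A] [DecidableEq A] [Fintype B] [DecidableEq B]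
    (ρ : Matrix (A × B) (A × B) ℂ) : Matrix (A × B) (A × B) ℂ :=
  ∑ c : A, (Matrix.single c c (1 : ℂ) ⊗ₖ (1 : Matrix B B ℂ)) * ρ *
    (Matrix.single c c (1 : ℂ) ⊗ₖ (1 : Matrix B B ℂ))

/-- The monotone `Δ_Z(ρ) = S(Δ(ρ)) − S(ρ)`. -/
noncomputable def DeltaZ {A B : Type*} [Fintype A] [DecidableEq A] [Fintype B] [DecidableEq B]
    (ρ : Matrix (A × B) (A × B) ℂ) : ℝ :=
  vnEntropy (dephA ρ) - vnEntropy ρ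

/-- The classical-quantum states with respect to the computational basis on `A`:
`σ = ∑ c p_c |c⟩⟨c| ⊗ ρ_c` with `p_c ≥ 0`, `∑ c p_c = 1` and each `ρ_c` a density matrix. -/
def IsCQ {A B : Type*} [Fintype A] [DecidableEq A] [Fintype B] [DecidableEq B]
    (σ : Matrix (A × B) (A × B) ℂ) : Prop :=
  ∃ (p : A → ℝ) (τ : A → Matrix B B ℂ),
    (∀ c, 0 ≤ p c) ∧ (∑ c, p c = 1) ∧
    (∀ c, (τ c).PosSemidef ∧ (τ c).trace = 1) ∧
    σ = ∑ c, (p c : ℂ) • (Matrix.single c c (1 : ℂ) ⊗ₖ τ c)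

/-!
Write `ρ = U diag(λ) U†` and `Δ(ρ) = W diag(μ) W†`, and let `P_c = |c⟩⟨c| ⊗ I`. The matrix
`Q i j = ∑ c |(W† P_c U) i j|²` is doubly stochastic because `∑ c P_c = 1` and `U`, `W` are
unitary, and `μ = Q λ`. Jensen's inequality for the strictly convex `x ↦ x log x`, applied row by
row, gives `∑ μ log μ ≤ ∑ λ log λ`, that is `S(ρ) ≤ S(Δ(ρ))`. In the equality case `λ j = μ i`
whenever `Q i j ≠ 0`, so `diag(λ)` can be moved across every `(W† P_c U)†`; this gives
`ρ P_c W = P_c W diag(μ)`, and summing over `c`, `ρ = Δ(ρ)`. Finally, the fixed points of `Δ` are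
the block-diagonal states, and normalising the diagonal blocks writes them as classical-quantum
states.
-/

section DoublyStochastic

variable {n : Type*} [Fintype n] [DecidableEq n] {s : Set ℝ} {f : ℝ → ℝ} {Q : Matrix n n ℝ}
  {x : n → ℝ}

lemma ConvexOn.map_mulVec_le (hf : ConvexOn ℝ s f) (hQ : Q ∈ doublyStochastic ℝ n)
    (hx : ∀ j, x j ∈ s) (i : n) : f ((Q *ᵥ x) i) ≤ (Q *ᵥ (f ∘ x)) i :=
  hf.map_sum_le (fun j _ => hQ.1 i j) (sum_row_of_mem_doublyStochastic hQ i) (fun j _ => hx j)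

lemma ConvexOn.sum_map_mulVec_le (hf : ConvexOn ℝ s f) (hQ : Q ∈ doublyStochastic ℝ n)
    (hx : ∀ j, x j ∈ s) : ∑ i, f ((Q *ᵥ x) i) ≤ ∑ j, f (x j) :=
  (Finset.sum_le_sum fun i _ => hf.map_mulVec_le hQ hx i).trans_eq
    (sum_mulVec_of_mem_doublyStochastic hQ)

lemma StrictConvexOn.eq_mulVec_of_sum_map_mulVec_eq (hf : StrictConvexOn ℝ s f)
    (hQ : Q ∈ doublyStochastic ℝ n) (hx : ∀ j, x j ∈ s)
    (h : ∑ i, f ((Q *ᵥ x) i) = ∑ j, f (x j)) {i j : n} (hij : Q i j ≠ 0) :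
    x j = (Q *ᵥ x) i := by
  have hrow : f (∑ k, Q i k • x k) = ∑ k, Q i k • f (x k) :=
    (Finset.sum_eq_sum_iff_of_le fun i _ => hf.convexOn.map_mulVec_le hQ hx i).1
      (h.trans (sum_mulVec_of_mem_doublyStochastic hQ).symm) i (Finset.mem_univ i)
  have hconst := (hf.map_sum_eq_iff_of_nonneg (fun k _ => hQ.1 i k)
    (sum_row_of_mem_doublyStochastic hQ i) (fun k _ => hx k)).1 hrow
  calc x j = ∑ k, Q i k * x j := by
        rw [← Finset.sum_mul, sum_row_of_mem_doublyStochastic hQ i, one_mul]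
    _ = (Q *ᵥ x) i := Finset.sum_congr rfl fun k _ => by
        rcases eq_or_ne (Q i k) 0 with hik | hik
        · simp [hik]
        · rw [hconst (Finset.mem_univ k) hik (Finset.mem_univ j) hij]

end DoublyStochastic

section KrausTransition

variable {m n ι : Type*}

lemma mul_diagonal_mul_conjTranspose_apply_self [Fintype n] [DecidableEq n] (M : Matrix m n ℂ)
    (d : n → ℂ) (i : m) :
    (M * diagonal d * Mᴴ) i i = ∑ j, d j * Complex.normSq (M i j) := by
  rw [mul_apply]
  simp only [mul_diagonal, conjTranspose_apply, RCLike.star_def]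
  exact Finset.sum_congr rfl fun j _ => by rw [mul_right_comm, Complex.mul_conj, mul_comm]

lemma mul_conjTranspose_apply_self [Fintype n] (M : Matrix m n ℂ) (i : m) :
    (M * Mᴴ) i i = ∑ j, (Complex.normSq (M i j) : ℂ) := by
  simp only [mul_apply, conjTranspose_apply, RCLike.star_def, Complex.mul_conj]

lemma conjTranspose_mul_apply_self [Fintype m] (M : Matrix m n ℂ) (j : n) :
    (Mᴴ * M) j j = ∑ i, (Complex.normSq (M i j) : ℂ) := by
  simp only [mul_apply, conjTranspose_apply, RCLike.star_def, Complex.normSq_eq_conj_mul_self]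

variable [Fintype n] [DecidableEq n] [Fintype ι]

def krausTransition (A : ι → Matrix n n ℂ) : Matrix n n ℝ :=
  of fun i j => ∑ c, Complex.normSq (A c i j)

lemma krausTransition_mem_doublyStochastic {A : ι → Matrix n n ℂ}
    (h₁ : ∑ c, A c * (A c)ᴴ = 1) (h₂ : ∑ c, (A c)ᴴ * A c = 1) :
    krausTransition A ∈ doublyStochastic ℝ n := by
  refine mem_doublyStochastic_iff_sum.2 ⟨fun i j => Finset.sum_nonneg fun c _ =>
    Complex.normSq_nonneg _, fun i => ?_, fun j => ?_⟩
  · have := congr_fun₂ h₁ i i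
    simp only [Matrix.sum_apply, mul_conjTranspose_apply_self, one_apply_eq] at this
    rw [Finset.sum_comm] at this
    exact_mod_cast this
  · have := congr_fun₂ h₂ j j
    simp only [Matrix.sum_apply, conjTranspose_mul_apply_self, one_apply_eq] at this
    rw [Finset.sum_comm] at this
    exact_mod_cast this

lemma diag_sum_mul_diagonal_mul_conjTranspose (A : ι → Matrix n n ℂ) (d : n → ℝ) (i : n) :
    (∑ c, A c * diagonal (RCLike.ofReal ∘ d) * (A c)ᴴ : Matrix n n ℂ) i i =
      ((krausTransition A *ᵥ d) i : ℂ) := by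
  simp only [Matrix.sum_apply, mul_diagonal_mul_conjTranspose_apply_self, mulVec, dotProduct,
    krausTransition, of_apply, Finset.sum_mul]
  push_cast
  rw [Finset.sum_comm]
  exact Finset.sum_congr rfl fun j _ => Finset.sum_congr rfl fun c _ => by simp [mul_comm]

lemma diagonal_mul_conjTranspose_comm_of_krausTransition {A : ι → Matrix n n ℂ} {d e : n → ℝ}
    (h : ∀ i j, krausTransition A i j ≠ 0 → d j = e i) (c : ι) :
    diagonal (RCLike.ofReal ∘ d) * (A c)ᴴ = (A c)ᴴ * diagonal (RCLike.ofReal ∘ e) := by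
  ext j i
  rw [diagonal_mul, mul_diagonal, conjTranspose_apply]
  rcases eq_or_ne (A c i j) 0 with hA | hA
  · simp [hA]
  · have hpos : 0 < krausTransition A i j :=
      (Complex.normSq_pos.2 hA).trans_le <| Finset.single_le_sum
        (f := fun c => Complex.normSq (A c i j)) (fun _ _ => Complex.normSq_nonneg _)
        (Finset.mem_univ c)
    simp only [Function.comp_apply, h i j hpos.ne', mul_comm]

end KrausTransition

section Pinching

variable {n ι : Type*} [Fintype n] [DecidableEq n] [Fintype ι] {P : ι → Matrix n n ℂ}
  {ρ : Matrix n n ℂ} {U W : Matrix n n ℂ} {d e : n → ℝ}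

def pinching (P : ι → Matrix n n ℂ) (ρ : Matrix n n ℂ) : Matrix n n ℂ :=
  ∑ c, P c * ρ * P c

omit [DecidableEq n] in
lemma isHermitian_pinching (hP : ∀ c, (P c).IsHermitian) (hρ : ρ.IsHermitian) :
    (pinching P ρ).IsHermitian :=
  isSelfAdjoint_sum _ fun c _ => by
    simpa only [(hP c).eq] using (isHermitian_conjTranspose_mul_mul (P c) hρ).isSelfAdjoint

lemma krausTransition_pinching_mem_doublyStochastic (hP : ∀ c, IsStarProjection (P c))
    (hsum : ∑ c, P c = 1) (hU : U ∈ unitaryGroup n ℂ) (hW : W ∈ unitaryGroup n ℂ) :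
    krausTransition (fun c => Wᴴ * P c * U) ∈ doublyStochastic ℝ n := by
  have hPH : ∀ c, (P c)ᴴ = P c := fun c => (hP c).isSelfAdjoint
  have hPP : ∀ c, P c * P c = P c := fun c => (hP c).isIdempotentElem
  have hUU : U * Uᴴ = 1 := Unitary.mul_star_self_of_mem hU
  have hUU' : Uᴴ * U = 1 := Unitary.star_mul_self_of_mem hU
  have hWW : W * Wᴴ = 1 := Unitary.mul_star_self_of_mem hW
  have hWW' : Wᴴ * W = 1 := Unitary.star_mul_self_of_mem hW
  refine krausTransition_mem_doublyStochastic ?_ ?_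
  · calc ∑ c, (Wᴴ * P c * U) * (Wᴴ * P c * U)ᴴ = Wᴴ * (∑ c, P c) * W := by
          simp only [conjTranspose_mul, conjTranspose_conjTranspose, hPH, Finset.mul_sum,
            Finset.sum_mul, Matrix.mul_assoc]
          refine Finset.sum_congr rfl fun c _ => ?_
          rw [← Matrix.mul_assoc U, hUU, Matrix.one_mul, ← Matrix.mul_assoc (P c), hPP]
      _ = 1 := by rw [hsum, Matrix.mul_one, hWW']
  · calc ∑ c, (Wᴴ * P c * U)ᴴ * (Wᴴ * P c * U) = Uᴴ * (∑ c, P c) * U := by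
          simp only [conjTranspose_mul, conjTranspose_conjTranspose, hPH, Finset.mul_sum,
            Finset.sum_mul, Matrix.mul_assoc]
          refine Finset.sum_congr rfl fun c _ => ?_
          rw [← Matrix.mul_assoc W, hWW, Matrix.one_mul, ← Matrix.mul_assoc (P c), hPP]
      _ = 1 := by rw [hsum, Matrix.mul_one, hUU']

theorem eigenvalues_pinching_eq_mulVec (hP : ∀ c, (P c).IsHermitian) (hW : W ∈ unitaryGroup n ℂ)
    (hρ : ρ = U * diagonal (RCLike.ofReal ∘ d) * Uᴴ)
    (hσ : pinching P ρ = W * diagonal (RCLike.ofReal ∘ e) * Wᴴ) :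
    e = krausTransition (fun c => Wᴴ * P c * U) *ᵥ d := by
  have hWW' : Wᴴ * W = 1 := Unitary.star_mul_self_of_mem hW
  have hconj : diagonal (RCLike.ofReal ∘ e) =
      ∑ c, (Wᴴ * P c * U) * diagonal (RCLike.ofReal ∘ d) * (Wᴴ * P c * U)ᴴ := by
    calc diagonal (RCLike.ofReal ∘ e) = Wᴴ * pinching P ρ * W := by
          rw [hσ, Matrix.mul_assoc, Matrix.mul_assoc, hWW', Matrix.mul_one, ← Matrix.mul_assoc,
            hWW', Matrix.one_mul]
      _ = _ := by
          simp only [pinching, Finset.mul_sum, Finset.sum_mul, hρ, conjTranspose_mul,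
            conjTranspose_conjTranspose, (hP _).eq, Matrix.mul_assoc]
  ext i
  have := congr_fun₂ hconj i i
  rw [diag_sum_mul_diagonal_mul_conjTranspose, diagonal_apply_eq] at this
  simpa using this

theorem pinching_eq_self_of_krausTransition (hP : ∀ c, (P c).IsHermitian) (hsum : ∑ c, P c = 1)
    (hU : U ∈ unitaryGroup n ℂ) (hW : W ∈ unitaryGroup n ℂ)
    (hρ : ρ = U * diagonal (RCLike.ofReal ∘ d) * Uᴴ)
    (hσ : pinching P ρ = W * diagonal (RCLike.ofReal ∘ e) * Wᴴ)
    (h : ∀ i j, krausTransition (fun c => Wᴴ * P c * U) i j ≠ 0 → d j = e i) :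
    pinching P ρ = ρ := by
  have hUU : U * Uᴴ = 1 := Unitary.mul_star_self_of_mem hU
  have hWW : W * Wᴴ = 1 := Unitary.mul_star_self_of_mem hW
  have hstep : ∀ c, ρ * (P c * W) = P c * (W * diagonal (RCLike.ofReal ∘ e)) := by
    intro c
    have hA : (Wᴴ * P c * U)ᴴ = Uᴴ * (P c * W) := by
      simp only [conjTranspose_mul, conjTranspose_conjTranspose, (hP c).eq, Matrix.mul_assoc]
    calc ρ * (P c * W) = U * (diagonal (RCLike.ofReal ∘ d) * (Wᴴ * P c * U)ᴴ) := by
          rw [hρ, hA]; simp only [Matrix.mul_assoc]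
      _ = U * ((Wᴴ * P c * U)ᴴ * diagonal (RCLike.ofReal ∘ e)) := by
          rw [diagonal_mul_conjTranspose_comm_of_krausTransition h c]
      _ = P c * (W * diagonal (RCLike.ofReal ∘ e)) := by
          rw [hA, ← Matrix.mul_assoc, ← Matrix.mul_assoc, hUU, Matrix.one_mul, Matrix.mul_assoc]
  have hρW : ρ * W = W * diagonal (RCLike.ofReal ∘ e) := by
    simpa only [← Finset.mul_sum, ← Finset.sum_mul, hsum, Matrix.one_mul] using
      Finset.sum_congr rfl fun c (_ : c ∈ Finset.univ) => hstep c
  rw [hσ, ← hρW, Matrix.mul_assoc, hWW, Matrix.mul_one]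

end Pinching

section Entropy

variable {n ι : Type*} [Fintype n] [DecidableEq n] [Fintype ι] {P : ι → Matrix n n ℂ}
  {ρ : Matrix n n ℂ}

lemma Matrix.IsHermitian.vnEntropy_eq (hρ : ρ.IsHermitian) :
    vnEntropy ρ = -(∑ i, hρ.eigenvalues i * Real.log (hρ.eigenvalues i)) / Real.log 2 := by
  simp only [vnEntropy, dif_pos hρ, Real.logb, neg_div, Finset.sum_div, mul_div_assoc]

lemma Matrix.IsHermitian.eq_eigenvectorUnitary_mul_diagonal (hρ : ρ.IsHermitian) :
    ρ = (hρ.eigenvectorUnitary : Matrix n n ℂ) * diagonal (RCLike.ofReal ∘ hρ.eigenvalues) *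
      (hρ.eigenvectorUnitary : Matrix n n ℂ)ᴴ := by
  simpa only [Unitary.conjStarAlgAut_apply, star_eq_conjTranspose] using hρ.spectral_theorem

theorem exists_doublyStochastic_eigenvalues_pinching (hP : ∀ c, IsStarProjection (P c))
    (hsum : ∑ c, P c = 1) (hρ : ρ.IsHermitian) (hσ : (pinching P ρ).IsHermitian) :
    ∃ Q ∈ doublyStochastic ℝ n, hσ.eigenvalues = Q *ᵥ hρ.eigenvalues ∧
      ((∀ i j, Q i j ≠ 0 → hρ.eigenvalues j = hσ.eigenvalues i) → pinching P ρ = ρ) := by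
  have hPH : ∀ c, (P c).IsHermitian := fun c => (hP c).isSelfAdjoint
  have hU := hρ.eigenvectorUnitary.2
  have hW := hσ.eigenvectorUnitary.2
  exact ⟨_, krausTransition_pinching_mem_doublyStochastic hP hsum hU hW,
    eigenvalues_pinching_eq_mulVec hPH hW hρ.eq_eigenvectorUnitary_mul_diagonal
      hσ.eq_eigenvectorUnitary_mul_diagonal,
    pinching_eq_self_of_krausTransition hPH hsum hU hW hρ.eq_eigenvectorUnitary_mul_diagonal
      hσ.eq_eigenvectorUnitary_mul_diagonal⟩

theorem vnEntropy_le_vnEntropy_pinching (hP : ∀ c, IsStarProjection (P c))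
    (hsum : ∑ c, P c = 1) (hρ : ρ.PosSemidef) :
    vnEntropy ρ ≤ vnEntropy (pinching P ρ) := by
  have hσ := isHermitian_pinching (fun c => (hP c).isSelfAdjoint) hρ.isHermitian
  obtain ⟨Q, hQ, hμ, -⟩ := exists_doublyStochastic_eigenvalues_pinching hP hsum hρ.isHermitian hσ
  rw [hρ.isHermitian.vnEntropy_eq, hσ.vnEntropy_eq, hμ]
  exact div_le_div_of_nonneg_right (neg_le_neg <|
    Real.strictConvexOn_mul_log.convexOn.sum_map_mulVec_le hQ hρ.eigenvalues_nonneg)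
    (Real.log_nonneg one_le_two)

theorem pinching_eq_self_of_vnEntropy_eq (hP : ∀ c, IsStarProjection (P c))
    (hsum : ∑ c, P c = 1) (hρ : ρ.PosSemidef) (h : vnEntropy (pinching P ρ) = vnEntropy ρ) :
    pinching P ρ = ρ := by
  have hσ := isHermitian_pinching (fun c => (hP c).isSelfAdjoint) hρ.isHermitian
  obtain ⟨Q, hQ, hμ, hrigid⟩ :=
    exists_doublyStochastic_eigenvalues_pinching hP hsum hρ.isHermitian hσ
  rw [hρ.isHermitian.vnEntropy_eq, hσ.vnEntropy_eq, hμ,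
    div_left_inj' (Real.log_pos one_lt_two).ne', neg_inj] at h
  refine hrigid fun i j hij => ?_
  rw [hμ]
  exact Real.strictConvexOn_mul_log.eq_mulVec_of_sum_map_mulVec_eq hQ hρ.eigenvalues_nonneg h hij

end Entropy

section DensityMatrix

lemma IsDensity.nonempty {n : Type*} [Fintype n] {ρ : Matrix n n ℂ} (hρ : IsDensity ρ) :
    Nonempty n := by
  by_contra h
  rw [not_nonempty_iff] at h
  simpa [trace] using hρ.2

lemma isDensity_single {n : Type*} [Fintype n] [DecidableEq n] (i : n) :
    IsDensity (single i i (1 : ℂ)) := by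
  rw [← diagonal_single]
  refine ⟨PosSemidef.diagonal (Pi.single_nonneg.2 zero_le_one), by simp [trace_diagonal]⟩

lemma Matrix.PosSemidef.exists_eq_smul_isDensity {n : Type*} [Fintype n] [DecidableEq n]
    [Nonempty n] {M : Matrix n n ℂ} (hM : M.PosSemidef) :
    ∃ τ, IsDensity τ ∧ M = (M.trace.re : ℂ) • τ := by
  have htr : (M.trace.re : ℂ) = M.trace := (Complex.eq_re_of_ofReal_le hM.trace_nonneg).symm
  rw [htr]
  rcases eq_or_ne M.trace 0 with h0 | h0
  · exact ⟨_, isDensity_single (Classical.arbitrary n), by simp [hM.trace_eq_zero_iff.1 h0]⟩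
  · refine ⟨M.trace⁻¹ • M, ⟨hM.smul (inv_nonneg_of_nonneg hM.trace_nonneg), ?_⟩, ?_⟩
    · rw [trace_smul, smul_eq_mul, inv_mul_cancel₀ h0]
    · rw [smul_smul, mul_inv_cancel₀ h0, one_smul]

end DensityMatrix

section Dephasing

variable {A B : Type*} [Fintype A] [DecidableEq A] [Fintype B] [DecidableEq B]
  {ρ : Matrix (A × B) (A × B) ℂ}

omit [Fintype A] [Fintype B] in
lemma single_kronecker_one_eq_diagonal (c : A) :
    single c c (1 : ℂ) ⊗ₖ (1 : Matrix B B ℂ) = diagonal fun x => if x.1 = c then 1 else 0 := by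
  ext ⟨a, b⟩ ⟨a', b'⟩
  simp only [kroneckerMap_apply, single_apply, one_apply, diagonal_apply, Prod.ext_iff]
  grind

lemma isStarProjection_single_kronecker_one (c : A) :
    IsStarProjection (single c c (1 : ℂ) ⊗ₖ (1 : Matrix B B ℂ)) where
  isIdempotentElem := by
    rw [IsIdempotentElem, ← mul_kronecker_mul, single_mul_single_same, Matrix.mul_one, mul_one]
  isSelfAdjoint := by
    rw [IsSelfAdjoint, star_eq_conjTranspose, conjTranspose_kronecker, conjTranspose_one,
      conjTranspose_single, star_one]

omit [Fintype B] in
lemma sum_single_kronecker_one : ∑ c : A, single c c (1 : ℂ) ⊗ₖ (1 : Matrix B B ℂ) = 1 :=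
  calc ∑ c : A, single c c (1 : ℂ) ⊗ₖ (1 : Matrix B B ℂ)
      _ = (∑ c, single c c (1 : ℂ)) ⊗ₖ (1 : Matrix B B ℂ) := by
        ext; simp only [Matrix.sum_apply, kroneckerMap_apply, Finset.sum_mul]
      _ = 1 := by rw [sum_single_one, one_kronecker_one]

lemma dephA_eq_pinching :
    dephA ρ = pinching (fun c : A => single c c (1 : ℂ) ⊗ₖ (1 : Matrix B B ℂ)) ρ :=
  rfl

lemma vnEntropy_le_vnEntropy_dephA (hρ : ρ.PosSemidef) :
    vnEntropy ρ ≤ vnEntropy (dephA ρ) := by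
  rw [dephA_eq_pinching]
  exact vnEntropy_le_vnEntropy_pinching isStarProjection_single_kronecker_one
    sum_single_kronecker_one hρ

lemma dephA_eq_self_of_vnEntropy_eq (hρ : ρ.PosSemidef)
    (h : vnEntropy (dephA ρ) = vnEntropy ρ) : dephA ρ = ρ := by
  rw [dephA_eq_pinching] at h ⊢
  exact pinching_eq_self_of_vnEntropy_eq isStarProjection_single_kronecker_one
    sum_single_kronecker_one hρ h

lemma dephA_apply (a a' : A) (b b' : B) :
    dephA ρ (a, b) (a', b') = if a = a' then ρ (a, b) (a', b') else 0 := by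
  simp only [dephA, single_kronecker_one_eq_diagonal, Matrix.sum_apply, diagonal_mul,
    mul_diagonal]
  simp

lemma dephA_eq_sum_single_kronecker_submatrix :
    dephA ρ = ∑ c, single c c (1 : ℂ) ⊗ₖ ρ.submatrix (Prod.mk c) (Prod.mk c) := by
  ext ⟨a, b⟩ ⟨a', b'⟩
  simp only [dephA_apply, Matrix.sum_apply, kroneckerMap_apply, single_apply, submatrix_apply]
  split_ifs with h
  · subst h
    simp
  · exact (Finset.sum_eq_zero fun c _ => by
      rw [if_neg fun hc => h (hc.1.symm.trans hc.2), zero_mul]).symm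

lemma IsCQ.dephA_eq (hρ : IsCQ ρ) : dephA ρ = ρ := by
  obtain ⟨p, τ, -, -, -, rfl⟩ := hρ
  ext ⟨a, b⟩ ⟨a', b'⟩
  rw [dephA_apply]
  split_ifs with h
  · rfl
  · simp only [Matrix.sum_apply, Matrix.smul_apply, kroneckerMap_apply, single_apply, smul_eq_mul]
    exact (Finset.sum_eq_zero fun c _ => by
      rw [if_neg fun hc => h (hc.1.symm.trans hc.2), zero_mul, mul_zero]).symm

omit [DecidableEq A] [DecidableEq B] in
lemma trace_eq_sum_trace_submatrix :
    ρ.trace = ∑ c, (ρ.submatrix (Prod.mk c) (Prod.mk c)).trace := by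
  simp only [trace, diag_apply, submatrix_apply, Fintype.sum_prod_type]

lemma isCQ_of_dephA_eq_self (hρ : IsDensity ρ) (h : dephA ρ = ρ) : IsCQ ρ := by
  have : Nonempty B := hρ.nonempty.map Prod.snd
  have hblock : ∀ c, (ρ.submatrix (Prod.mk c) (Prod.mk c)).PosSemidef := fun c =>
    hρ.1.submatrix _
  choose τ hτ hblock_eq using fun c => (hblock c).exists_eq_smul_isDensity
  refine ⟨fun c => (ρ.submatrix (Prod.mk c) (Prod.mk c)).trace.re, τ,
    fun c => (Complex.nonneg_iff.1 (hblock c).trace_nonneg).1, ?_, hτ, ?_⟩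
  · rw [← Complex.re_sum, ← trace_eq_sum_trace_submatrix, hρ.2, Complex.one_re]
  · conv_lhs => rw [← h, dephA_eq_sum_single_kronecker_submatrix]
    simp_rw [← kronecker_smul, ← hblock_eq]

lemma isCQ_iff_dephA_eq_self (hρ : IsDensity ρ) : IsCQ ρ ↔ dephA ρ = ρ :=
  ⟨IsCQ.dephA_eq, isCQ_of_dephA_eq_self hρ⟩

end Dephasing

/-- **Faithfulness of `Δ_Z`.** For every density matrix `ρ` on
`ℂ^{d_A} ⊗ ℂ^{d_B}`, `Δ_Z(ρ) ≥ 0`, and `Δ_Z(ρ) = 0` iff `ρ ∈ CQ_Z`, equivalently iff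
`ρ = Δ(ρ)`. -/
theorem DeltaZ_faithful (dA dB : ℕ)
    (ρ : Matrix (Fin dA × Fin dB) (Fin dA × Fin dB) ℂ) (hρ : IsDensity ρ) :
    0 ≤ DeltaZ ρ ∧ (DeltaZ ρ = 0 ↔ IsCQ ρ) ∧ (DeltaZ ρ = 0 ↔ ρ = dephA ρ) := by
  have hfixed : DeltaZ ρ = 0 ↔ ρ = dephA ρ := by
    rw [DeltaZ, sub_eq_zero, eq_comm (a := ρ)]
    exact ⟨dephA_eq_self_of_vnEntropy_eq hρ.1, congrArg vnEntropy⟩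
  refine ⟨sub_nonneg.2 (vnEntropy_le_vnEntropy_dephA hρ.1), ?_, hfixed⟩
  rw [hfixed, isCQ_iff_dephA_eq_self hρ, eq_comm]
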